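/- For binary p^{(j,l)} in {0,1} and positive weights N_j, the objective sum_j |p^{(j,l)} N_j / (sum_i p^{(i,l)} N_i) - N_j / (sum_i N_i)| equals 2 * (sum over j with p^{(j,l)}=0 of N_j) / (sum_i N_i). Hence minimizing this objective is equivalent to maximizing the total data weight sum_{j: p^{(j,l)}=1} N_j of participating cells. -/
import Mathlib

open scoped Classical

theorem bias_objective_identity
    {L : ℕ} (hL : 0 < L)
    (N p : Fin L → ℝ)
    (hN : ∀ j, 0 < N j)
    (hp : ∀ j, p j = 0 ∨ p j = 1)
    (hex : ∃ j, p j = 1) :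
    ∑ j, |p j * N j / (∑ i, p i * N i) - N j / ∑ i, N i| =
      2 * (∑ j ∈ Finset.univ.filter (fun j => p j = 0), N j) / ∑ i, N i := by
  obtain ⟨j₀, hj₀⟩ := hex
  set S := ∑ i, N i with hSdef
  set T := ∑ i, p i * N i with hTdef
  have hS : 0 < S := Finset.sum_pos (fun i _ => hN i) ⟨j₀, Finset.mem_univ j₀⟩
  have hT : 0 < T := by
    have h1 : N j₀ ≤ T := by
      have := Finset.single_le_sum (f := fun i => p i * N i)
        (fun i _ => by rcases hp i with h | h <;> simp [h, (hN i).le]) (Finset.mem_univ j₀)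
      simpa [hj₀] using this
    linarith [hN j₀]
  have hTS : T ≤ S := Finset.sum_le_sum (fun i _ => by
    rcases hp i with h | h <;> simp [h, (hN i).le])
  have hTB : T = ∑ j ∈ Finset.univ.filter (fun j => ¬ p j = 0), N j := by
    rw [hTdef, Finset.sum_filter]
    apply Finset.sum_congr rfl
    intro i _
    rcases hp i with h | h <;> simp [h]
  have hA : ∑ j ∈ Finset.univ.filter (fun j => p j = 0), N j = S - T := by
    rw [hTB, hSdef, eq_sub_iff_add_eq,
      Finset.sum_filter_add_sum_filter_not Finset.univ (fun j => p j = 0) N]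
  rw [← Finset.sum_filter_add_sum_filter_not Finset.univ (fun j => p j = 0)]
  have e1 : ∑ j ∈ Finset.univ.filter (fun j => p j = 0),
      |p j * N j / T - N j / S| = (S - T) / S := by
    rw [← hA, Finset.sum_div]
    apply Finset.sum_congr rfl
    intro j hj
    have hpj : p j = 0 := (Finset.mem_filter.mp hj).2
    rw [hpj, zero_mul, zero_div, zero_sub, abs_neg,
      abs_of_nonneg (div_nonneg (hN j).le hS.le)]
  have e2 : ∑ j ∈ Finset.univ.filter (fun j => ¬ p j = 0),
      |p j * N j / T - N j / S| = (S - T) / S := by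
    have key : ∀ j ∈ Finset.univ.filter (fun j => ¬ p j = 0),
        |p j * N j / T - N j / S| = N j / T - N j / S := by
      intro j hj
      have hpj : p j = 1 := (hp j).resolve_left (Finset.mem_filter.mp hj).2
      rw [hpj, one_mul]
      apply abs_of_nonneg
      rw [sub_nonneg]
      gcongr
      exact (hN j).le
    rw [Finset.sum_congr rfl key, Finset.sum_sub_distrib, ← Finset.sum_div,
      ← Finset.sum_div, ← hTB]
    field_simp
  rw [e1, e2, hA]
  ring
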